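/- For all 0 ≤ δ ≤ 1 and all ρ with |ρ| ≤ 1, K(δρ) ≤ ρ²·K(δ), where K(δ) = ((1+δ)·log₂(1+δ) + (1−δ)·log₂(1−δ))/2. -/

import Mathlib

/-!
In natural logarithms, `2 log 2 · K(x) = (1+x) log(1+x) + (1-x) log(1-x)`, and for `|x| < 1`
this equals `∑ₘ x^(2m+2) / ((2m+1)(m+1))`: an even power series with nonnegative coefficients and
no term of degree below 2. Termwise `(δρ)^(2m+2) ≤ ρ² δ^(2m+2)` when `|ρ| ≤ 1`, which gives the
inequality for `δ < 1`; the case `δ = 1` follows by continuity of `K`.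
-/

/-- The binary information function `K(δ) = ((1+δ)·log₂(1+δ) + (1−δ)·log₂(1−δ))/2`. -/
noncomputable def binK (δ : ℝ) : ℝ :=
  ((1 + δ) * Real.logb 2 (1 + δ) + (1 - δ) * Real.logb 2 (1 - δ)) / 2

open Real

lemma hasSum_mul_log_one_add_add_mul_log_one_sub {x : ℝ} (hx : |x| < 1) :
    HasSum (fun m : ℕ => x ^ (2 * m + 2) / ((2 * m + 1) * (m + 1)))
      ((1 + x) * log (1 + x) + (1 - x) * log (1 - x)) := by
  have hx2 : |x ^ 2| < 1 := by
    rw [abs_pow, sq_lt_one_iff₀ (abs_nonneg x)]; exact hx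
  -- `(1+x) log(1+x) + (1-x) log(1-x) = log (1 - x²) + x (log (1+x) - log (1-x))`
  have hlog : HasSum (fun m : ℕ => -(x ^ (2 * m + 2) / (m + 1))) (log (1 + x) + log (1 - x)) := by
    have h := (hasSum_pow_div_log_of_abs_lt_one hx2).neg
    rw [neg_neg, show 1 - x ^ 2 = (1 + x) * (1 - x) by ring,
      log_mul (by linarith [neg_abs_le x]) (by linarith [le_abs_self x])] at h
    simpa only [← pow_mul, mul_add, mul_one] using h
  have hodd := (hasSum_log_sub_log_of_abs_lt_one hx).mul_left x
  convert hlog.add hodd using 1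
  · funext m
    field_simp
    ring
  · ring

lemma binK_eq (x : ℝ) :
    binK x = ((1 + x) * log (1 + x) + (1 - x) * log (1 - x)) / (2 * log 2) := by
  unfold binK logb
  field_simp

lemma hasSum_binK {x : ℝ} (hx : |x| < 1) :
    HasSum (fun m : ℕ => x ^ (2 * m + 2) / ((2 * m + 1) * (m + 1) * (2 * log 2))) (binK x) := by
  rw [binK_eq]
  simpa only [div_div] using (hasSum_mul_log_one_add_add_mul_log_one_sub hx).div_const _

lemma continuous_binK : Continuous binK := by
  rw [funext binK_eq]
  exact ((continuous_mul_log.comp (by fun_prop)).add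
    (continuous_mul_log.comp (by fun_prop))).div_const _

lemma binK_mul_le_of_lt_one {δ ρ : ℝ} (h0 : 0 ≤ δ) (h1 : δ < 1) (hρ : |ρ| ≤ 1) :
    binK (δ * ρ) ≤ ρ ^ 2 * binK δ := by
  have hδ : |δ| < 1 := by rwa [abs_of_nonneg h0]
  have hδρ : |δ * ρ| < 1 := by
    rw [abs_mul]; exact lt_of_le_of_lt (mul_le_of_le_one_right (abs_nonneg δ) hρ) hδ
  refine hasSum_le (fun m => ?_) (hasSum_binK hδρ) ((hasSum_binK hδ).mul_left (ρ ^ 2))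
  have hρm : ρ ^ (2 * m + 2) ≤ ρ ^ 2 := by
    calc ρ ^ (2 * m + 2) = (ρ ^ 2) ^ (m + 1) := by ring
      _ ≤ (ρ ^ 2) ^ 1 :=
        pow_le_pow_of_le_one (sq_nonneg ρ) (sq_le_one_iff_abs_le_one ρ |>.mpr hρ) (by omega)
      _ = ρ ^ 2 := pow_one _
  have hlog2 : 0 < log 2 := log_pos one_lt_two
  rw [mul_pow, mul_div_assoc', mul_comm (ρ ^ 2)]
  gcongr

/-- For all `0 ≤ δ ≤ 1` and all `ρ` with `|ρ| ≤ 1`, `K(δρ) ≤ ρ²·K(δ)`. -/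
theorem binK_contraction (δ ρ : ℝ) (h0 : 0 ≤ δ) (h1 : δ ≤ 1) (hρ : |ρ| ≤ 1) :
    binK (δ * ρ) ≤ ρ ^ 2 * binK δ := by
  have hclosed : IsClosed {x : ℝ | binK (x * ρ) ≤ ρ ^ 2 * binK x} :=
    isClosed_le (continuous_binK.comp (continuous_mul_const ρ))
      (continuous_binK.const_mul _)
  have hIco : Set.Ico 0 1 ⊆ {x : ℝ | binK (x * ρ) ≤ ρ ^ 2 * binK x} :=
    fun x hx => binK_mul_le_of_lt_one hx.1 hx.2 hρ
  have hIcc := hclosed.closure_subset_iff.mpr hIco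
  rw [closure_Ico zero_ne_one] at hIcc
  exact hIcc ⟨h0, h1⟩
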